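/- For every fixed 0 < τ < √2, the function μ ↦ Λ(τ, Φ_c^{−1}(μ)) is concave on the interval 0 < μ < 1/2. -/

import Mathlib

open MeasureTheory ProbabilityTheory Real

noncomputable section

/-- `Φ_c(η) = Pr_{X ~ N(0,1)}[X ≥ η]`. -/
def gaussTail (η : ℝ) : ℝ := (gaussianReal 0 1 (Set.Ici η)).toReal

/-- The inverse of `Φ_c` on `(0,1)`: since `Φ_c` is continuous and strictly decreasing,
`Φ_c⁻¹(p) = sup {η : Φ_c(η) ≥ p}` for `p ∈ (0,1)`. -/
def gaussTailInv (p : ℝ) : ℝ := sSup {η : ℝ | p ≤ gaussTail η}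

/-- `Λ(τ, η) = Pr[X ≥ η ∧ (1 - τ²/2)X + √(τ² - τ⁴/4)·Y ≥ η] / Φ_c(η)` for independent
standard Gaussians `X, Y`. -/
def lambdaFn (τ η : ℝ) : ℝ :=
  (((gaussianReal 0 1).prod (gaussianReal 0 1))
      {z : ℝ × ℝ | η ≤ z.1 ∧
        η ≤ (1 - τ ^ 2 / 2) * z.1 + Real.sqrt (τ ^ 2 - τ ^ 4 / 4) * z.2}).toReal
    / gaussTail η

/-!
Put `ρ = 1 - τ²/2` and `s = √(τ² - τ⁴/4)`, so that `ρ² + s² = 1` and `Z = ρX + sY` is again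
standard Gaussian. The density of `(X, Z)` is symmetric in its two arguments, so the quadrant
`{X ≥ η, Z ≥ η}` has twice the mass of its part `{X ≥ η, Z > X} = {X ≥ η, Y > cX}`, where
`c = (1 - ρ)/s`. Fubini and the substitution `t = Φ_c(x)` then give
`Pr[X ≥ η, Z ≥ η] = 2 ∫₀^{Φ_c(η)} g`, with `g(t) = Φ_c(c Φ_c⁻¹(t))`, hence
`Λ(τ, Φ_c⁻¹(μ)) = 2 μ⁻¹ ∫₀^μ g` is twice the running average of `g`.
Now `g'(t) = c exp((1 - c²) Φ_c⁻¹(t)² / 2)` with `0 ≤ c ≤ 1`, which decreases as long as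
`Φ_c⁻¹(t) > 0`, i.e. for `t < 1/2`. So `g` is concave on `(0, 1/2)`, and so is its running
average `μ ↦ ∫₀¹ g(uμ) du`.
-/

open Filter Topology Set
open scoped ENNReal

local notation "γ" => gaussianReal 0 1

instance : NullSingletonClass γ := nullSingletonClass_gaussianReal one_ne_zero

lemma gaussTail_eq_integral_Ioi (η : ℝ) :
    gaussTail η = ∫ x in Ioi η, gaussianPDFReal 0 1 x := by
  rw [gaussTail, gaussianReal_apply_eq_integral 0 one_ne_zero, ENNReal.toReal_ofReal
    (setIntegral_nonneg measurableSet_Ici fun x _ => gaussianPDFReal_nonneg 0 1 x),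
    integral_Ici_eq_integral_Ioi]

lemma gaussTail_add_cdf (η : ℝ) : gaussTail η + cdf γ η = 1 := by
  rw [cdf_eq_real, gaussTail, ← measureReal_def, ← measureReal_congr Ioi_ae_eq_Ici,
    ← compl_Iic, measureReal_compl measurableSet_Iic]
  simp

lemma gaussTail_nonneg (η : ℝ) : 0 ≤ gaussTail η := ENNReal.toReal_nonneg

lemma tendsto_gaussTail_atTop : Tendsto gaussTail atTop (𝓝 0) := by
  have h := (tendsto_cdf_atTop (μ := γ)).const_sub 1
  rw [sub_self] at h
  exact h.congr fun η => by linarith [gaussTail_add_cdf η]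

lemma tendsto_gaussTail_atBot : Tendsto gaussTail atBot (𝓝 1) := by
  have h := (tendsto_cdf_atBot (μ := γ)).const_sub 1
  rw [sub_zero] at h
  exact h.congr fun η => by linarith [gaussTail_add_cdf η]

lemma hasDerivAt_gaussTail (η : ℝ) : HasDerivAt gaussTail (-gaussianPDFReal 0 1 η) η := by
  have hint (a : ℝ) : IntegrableOn (gaussianPDFReal 0 1) (Ioi a) :=
    (integrable_gaussianPDFReal 0 1).integrableOn
  have hcont : Continuous (gaussianPDFReal 0 1) := by
    unfold gaussianPDFReal
    fun_prop
  have hFTC : gaussTail = fun x => gaussTail 0 - ∫ t in (0 : ℝ)..x, gaussianPDFReal 0 1 t := by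
    ext x
    rw [gaussTail_eq_integral_Ioi, gaussTail_eq_integral_Ioi,
      ← intervalIntegral.integral_Ioi_sub_Ioi' (hint 0) (hint x), sub_sub_cancel]
  rw [hFTC]
  exact (intervalIntegral.integral_hasDerivAt_right (hcont.intervalIntegrable _ _)
    (hcont.stronglyMeasurableAtFilter _ _) hcont.continuousAt).const_sub _

lemma continuous_gaussTail : Continuous gaussTail :=
  continuous_iff_continuousAt.2 fun η => (hasDerivAt_gaussTail η).continuousAt

lemma strictAnti_gaussTail : StrictAnti gaussTail :=
  strictAnti_of_deriv_neg fun η => by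
    rw [(hasDerivAt_gaussTail η).deriv, neg_lt_zero]
    exact gaussianPDFReal_pos 0 1 η one_ne_zero

lemma gaussTail_pos (η : ℝ) : 0 < gaussTail η :=
  (strictAnti_gaussTail.antitone.le_of_tendsto tendsto_gaussTail_atTop (η + 1)).trans_lt
    (strictAnti_gaussTail (lt_add_one η))

lemma gaussTail_lt_one (η : ℝ) : gaussTail η < 1 :=
  (strictAnti_gaussTail (sub_one_lt η)).trans_le
    (by linarith [gaussTail_add_cdf (η - 1), cdf_nonneg γ (η - 1)])

lemma gaussTail_zero : gaussTail 0 = 1 / 2 := by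
  have hsymm : γ (Ici 0) = γ (Iic 0) := by
    have h := gaussianReal_map_neg (μ := 0) (v := 1)
    rw [neg_zero] at h
    conv_lhs => rw [← h]
    rw [Measure.map_apply measurable_neg measurableSet_Ici]
    congr 1
    ext x
    simp
  have h := gaussTail_add_cdf 0
  rw [cdf_eq_real, measureReal_def, ← hsymm] at h
  rw [gaussTail] at *
  linarith

lemma gaussTailInv_gaussTail (η : ℝ) : gaussTailInv (gaussTail η) = η := by
  have h : {x | gaussTail η ≤ gaussTail x} = Iic η := by
    ext x
    simp [strictAnti_gaussTail.le_iff_ge]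
  rw [gaussTailInv, h, csSup_Iic]

lemma exists_gaussTail_eq {p : ℝ} (hp : p ∈ Ioo 0 1) : ∃ η, gaussTail η = p :=
  mem_range_of_exists_le_of_exists_ge continuous_gaussTail
    (tendsto_gaussTail_atTop.eventually (eventually_le_nhds hp.1)).exists
    (tendsto_gaussTail_atBot.eventually (eventually_ge_nhds hp.2)).exists

lemma gaussTail_gaussTailInv {p : ℝ} (hp : p ∈ Ioo 0 1) : gaussTail (gaussTailInv p) = p := by
  obtain ⟨η, rfl⟩ := exists_gaussTail_eq hp
  rw [gaussTailInv_gaussTail]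

lemma strictAntiOn_gaussTailInv : StrictAntiOn gaussTailInv (Ioo 0 1) := by
  intro p hp q hq hpq
  rw [← strictAnti_gaussTail.lt_iff_gt, gaussTail_gaussTailInv hp, gaussTail_gaussTailInv hq]
  exact hpq

lemma gaussTailInv_pos {p : ℝ} (hp : p ∈ Ioo 0 (1 / 2)) : 0 < gaussTailInv p := by
  rw [← gaussTailInv_gaussTail 0, gaussTail_zero]
  exact strictAntiOn_gaussTailInv ⟨hp.1, hp.2.trans (by norm_num)⟩ ⟨by norm_num, by norm_num⟩ hp.2

lemma continuousAt_gaussTailInv {p : ℝ} (hp : p ∈ Ioo 0 1) : ContinuousAt gaussTailInv p := by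
  have himage : (fun q => -gaussTailInv q) '' Ioo 0 1 = univ :=
    eq_univ_of_forall fun η => ⟨gaussTail (-η), ⟨gaussTail_pos _, gaussTail_lt_one _⟩,
      by simp only [gaussTailInv_gaussTail, neg_neg]⟩
  have h : ContinuousAt (fun q => -gaussTailInv q) p :=
    continuousAt_of_monotoneOn_of_image_mem_nhds
      (fun q hq r hr hqr => neg_le_neg (strictAntiOn_gaussTailInv.antitoneOn hq hr hqr))
      (isOpen_Ioo.mem_nhds hp) (himage ▸ univ_mem)
  simpa only [neg_neg] using h.fun_neg

lemma hasDerivAt_gaussTailInv {p : ℝ} (hp : p ∈ Ioo 0 1) :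
    HasDerivAt gaussTailInv (-gaussianPDFReal 0 1 (gaussTailInv p))⁻¹ p :=
  HasDerivAt.of_local_left_inverse (continuousAt_gaussTailInv hp) (hasDerivAt_gaussTail _)
    (neg_ne_zero.2 (gaussianPDFReal_pos 0 1 _ one_ne_zero).ne')
    (eventually_of_mem (isOpen_Ioo.mem_nhds hp) fun _ hq => gaussTail_gaussTailInv hq)

lemma image_gaussTail_Ici (η : ℝ) : gaussTail '' Ici η = Ioc 0 (gaussTail η) := by
  ext t
  constructor
  · rintro ⟨x, hx, rfl⟩
    exact ⟨gaussTail_pos x, strictAnti_gaussTail.antitone hx⟩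
  · rintro ⟨ht0, htη⟩
    obtain ⟨b, hb⟩ :=
      (tendsto_gaussTail_atTop.eventually (eventually_le_nhds ht0)).exists_forall_of_atTop
    exact isPreconnected_Ici.intermediate_value (le_max_left η b) self_mem_Ici
      continuous_gaussTail.continuousOn ⟨hb _ (le_max_right _ _), htη⟩

lemma integral_Ioc_gaussTail {E : Type*} [NormedAddCommGroup E] [NormedSpace ℝ E]
    (g : ℝ → E) (η : ℝ) :
    ∫ t in Ioc 0 (gaussTail η), g t = ∫ x in Ici η, gaussianPDFReal 0 1 x • g (gaussTail x) := by
  rw [← image_gaussTail_Ici, integral_image_eq_integral_abs_deriv_smul measurableSet_Ici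
    (fun x _ => (hasDerivAt_gaussTail x).hasDerivWithinAt) strictAnti_gaussTail.injective.injOn]
  simp_rw [abs_neg, abs_of_pos (gaussianPDFReal_pos 0 1 _ one_ne_zero)]


def gaussTailScaled (c t : ℝ) : ℝ := gaussTail (c * gaussTailInv t)

lemma gaussianPDFReal_zero_one_mul (c x : ℝ) :
    gaussianPDFReal 0 1 (c * x) = exp ((1 - c ^ 2) * x ^ 2 / 2) * gaussianPDFReal 0 1 x := by
  simp only [gaussianPDFReal, NNReal.coe_one, mul_left_comm _ (√_)⁻¹, ← exp_add]
  ring_nf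

lemma hasDerivAt_gaussTailScaled (c : ℝ) {p : ℝ} (hp : p ∈ Ioo 0 1) :
    HasDerivAt (gaussTailScaled c) (c * exp ((1 - c ^ 2) * gaussTailInv p ^ 2 / 2)) p := by
  refine ((hasDerivAt_gaussTail _).comp p
    ((hasDerivAt_gaussTailInv hp).const_mul c)).congr_deriv ?_
  have := (gaussianPDFReal_pos 0 1 (gaussTailInv p) one_ne_zero).ne'
  rw [gaussianPDFReal_zero_one_mul]
  field_simp

lemma concaveOn_gaussTailScaled {c : ℝ} (hc0 : 0 ≤ c) (hc1 : c ≤ 1) :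
    ConcaveOn ℝ (Ioo 0 (1 / 2)) (gaussTailScaled c) := by
  have hsub : Ioo (0 : ℝ) (1 / 2) ⊆ Ioo 0 1 := Ioo_subset_Ioo_right (by norm_num)
  have hderiv := fun p (hp : p ∈ Ioo (0 : ℝ) (1 / 2)) => hasDerivAt_gaussTailScaled c (hsub hp)
  refine AntitoneOn.concaveOn_of_deriv (convex_Ioo _ _)
    (fun p hp => (hderiv p hp).continuousAt.continuousWithinAt) ?_ ?_ <;> rw [interior_Ioo]
  · exact fun p hp => (hderiv p hp).differentiableAt.differentiableWithinAt
  · intro p hp q hq hpq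
    have hpq' : gaussTailInv q ≤ gaussTailInv p :=
      strictAntiOn_gaussTailInv.antitoneOn (hsub hp) (hsub hq) hpq
    have : 0 ≤ 1 - c ^ 2 := by nlinarith
    rw [(hderiv p hp).deriv, (hderiv q hq).deriv]
    gcongr
    exact (gaussTailInv_pos hq).le

lemma intervalIntegrable_gaussTailScaled (c : ℝ) {μ : ℝ} (hμ : μ ∈ Ioo 0 1) :
    IntervalIntegrable (gaussTailScaled c) volume 0 μ := by
  have hcont : ContinuousOn (gaussTailScaled c) (Ioc 0 μ) := fun t ht =>
    (hasDerivAt_gaussTailScaled c ⟨ht.1, ht.2.trans_lt hμ.2⟩).continuousAt.continuousWithinAt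
  refine (intervalIntegrable_iff_integrableOn_Ioc_of_le hμ.1.le).2 <|
    IntegrableOn.of_bound measure_Ioc_lt_top (hcont.aestronglyMeasurable measurableSet_Ioc) 1
      (ae_of_all _ fun t => ?_)
  rw [gaussTailScaled, Real.norm_of_nonneg (gaussTail_nonneg _)]
  exact (gaussTail_lt_one _).le


lemma concaveOn_integral {α E : Type*} [MeasurableSpace α] {ν : Measure α} [AddCommGroup E]
    [Module ℝ E] {s : Set E} {f : α → E → ℝ} (hs : Convex ℝ s)
    (hf : ∀ᵐ u ∂ν, ConcaveOn ℝ s (f u)) (hint : ∀ x ∈ s, Integrable (fun u => f u x) ν) :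
    ConcaveOn ℝ s (fun x => ∫ u, f u x ∂ν) := by
  refine ⟨hs, fun x hx y hy a b ha hb hab => ?_⟩
  have hax := (hint x hx).const_mul a
  have hby := (hint y hy).const_mul b
  simp only [smul_eq_mul]
  rw [← integral_const_mul, ← integral_const_mul, ← integral_add hax hby]
  exact integral_mono_ae (hax.add hby) (hint _ (hs hx hy ha hb hab))
    (hf.mono fun u hu => hu.2 hx hy ha hb hab)

lemma ConcaveOn.runningAverage {g : ℝ → ℝ} {b : ℝ} (hg : ConcaveOn ℝ (Ioo 0 b) g)
    (hint : ∀ μ ∈ Ioo 0 b, IntervalIntegrable g volume 0 μ) :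
    ConcaveOn ℝ (Ioo 0 b) (fun μ => μ⁻¹ * ∫ t in 0..μ, g t) := by
  have hscale : ∀ μ ∈ Ioo 0 b, μ⁻¹ * ∫ t in 0..μ, g t = ∫ u in Ioc 0 1, g (u * μ) := by
    intro μ hμ
    rw [← intervalIntegral.integral_of_le zero_le_one,
      intervalIntegral.integral_comp_mul_right _ hμ.1.ne', zero_mul, one_mul, smul_eq_mul]
  refine ConcaveOn.congr ?_ fun μ hμ => (hscale μ hμ).symm
  refine concaveOn_integral (convex_Ioo 0 b) ?_ fun μ hμ => ?_
  · refine ae_restrict_of_forall_mem measurableSet_Ioc fun u hu => ?_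
    refine (hg.comp_linearMap (LinearMap.mulLeft ℝ u)).subset (fun μ hμ => ?_) (convex_Ioo 0 b)
    simp only [mem_preimage, LinearMap.mulLeft_apply, mem_Ioo]
    exact ⟨mul_pos hu.1 hμ.1, by nlinarith [hμ.1, hμ.2, hu.1, hu.2]⟩
  · have h := (hint μ hμ).comp_mul_right (c := μ)
    rw [zero_div, div_self hμ.1.ne'] at h
    exact h.1

lemma measure_eq_two_mul_measure_inter_lt {ω : Measure (ℝ × ℝ)}
    (hswap : ω.map Prod.swap = ω) (hdiag : ω (diagonal ℝ) = 0) {Q : Set (ℝ × ℝ)}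
    (hQ : MeasurableSet Q) (hQswap : Prod.swap ⁻¹' Q = Q) :
    ω Q = 2 * ω (Q ∩ {p | p.1 < p.2}) := by
  have hlt : MeasurableSet {p : ℝ × ℝ | p.1 < p.2} :=
    measurableSet_lt measurable_fst measurable_snd
  have hgt : ω (Q ∩ {p | p.2 < p.1}) = ω (Q ∩ {p | p.1 < p.2}) := by
    conv_rhs => rw [← hswap]
    rw [Measure.map_apply measurable_swap (hQ.inter hlt), preimage_inter, hQswap]
    rfl
  have hdiff : ω (Q \ {p | p.1 < p.2}) = ω (Q ∩ {p | p.2 < p.1}) := by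
    refine le_antisymm ?_ (measure_mono fun p hp => ⟨hp.1, (lt_asymm hp.2 : ¬p.1 < p.2)⟩)
    calc ω (Q \ {p | p.1 < p.2}) ≤ ω (Q ∩ {p | p.2 < p.1} ∪ diagonal ℝ) :=
          measure_mono fun p ⟨hpQ, hp⟩ => by
            rcases lt_or_eq_of_le (not_lt.1 (show ¬p.1 < p.2 from hp)) with h | h
            exacts [Or.inl ⟨hpQ, h⟩, Or.inr h.symm]
      _ ≤ ω (Q ∩ {p | p.2 < p.1}) + ω (diagonal ℝ) := measure_union_le _ _
      _ = ω (Q ∩ {p | p.2 < p.1}) := by rw [hdiag, add_zero]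
  rw [← measure_inter_add_sdiff Q hlt, hdiff, hgt, two_mul]

lemma gaussianReal_map_const_add_mul (a s : ℝ) :
    Measure.map (fun y => a + s * y) γ = gaussianReal a (s ^ 2).toNNReal := by
  calc Measure.map (fun y => a + s * y) γ = Measure.map (a + ·) (Measure.map (s * ·) γ) :=
        (Measure.map_map (by fun_prop) (by fun_prop)).symm
    _ = _ := by
      rw [gaussianReal_map_const_mul, gaussianReal_map_const_add, mul_zero, zero_add, mul_one]
      congr
      simp [sq_nonneg]

section Bivariate

variable {ρ s : ℝ}

def bivariateGaussianPDF (ρ s : ℝ) (p : ℝ × ℝ) : ℝ≥0∞ :=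
  gaussianPDF 0 1 p.1 * gaussianPDF (ρ * p.1) (s ^ 2).toNNReal p.2

lemma measurable_bivariateGaussianPDF : Measurable (bivariateGaussianPDF ρ s) := by
  unfold bivariateGaussianPDF gaussianPDF gaussianPDFReal
  fun_prop

lemma bivariateGaussianPDF_swap (hs : s ≠ 0) (hρs : ρ ^ 2 + s ^ 2 = 1) (p : ℝ × ℝ) :
    bivariateGaussianPDF ρ s p.swap = bivariateGaussianPDF ρ s p := by
  have hreal (x z : ℝ) : gaussianPDFReal 0 1 z * gaussianPDFReal (ρ * z) (s ^ 2).toNNReal x =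
      gaussianPDFReal 0 1 x * gaussianPDFReal (ρ * x) (s ^ 2).toNNReal z := by
    simp only [gaussianPDFReal, Real.coe_toNNReal _ (sq_nonneg s), NNReal.coe_one,
      mul_mul_mul_comm _ (exp _), ← exp_add]
    congr 2
    field_simp
    linear_combination (x ^ 2 - z ^ 2) * hρs
  simp only [bivariateGaussianPDF, gaussianPDF, Prod.fst_swap, Prod.snd_swap,
    ← ENNReal.ofReal_mul (gaussianPDFReal_nonneg _ _ _), hreal]

lemma map_prod_gaussianReal_shear (hs : s ≠ 0) :
    Measure.map (fun p => (p.1, ρ * p.1 + s * p.2)) (Measure.prod γ γ) =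
      (volume.prod volume).withDensity (bivariateGaussianPDF ρ s) := by
  ext A hA
  have hF : Measurable fun p : ℝ × ℝ => (p.1, ρ * p.1 + s * p.2) := by fun_prop
  rw [Measure.map_apply hF hA, Measure.prod_apply (hF hA), withDensity_apply _ hA,
    ← lintegral_indicator hA,
    lintegral_prod _ (measurable_bivariateGaussianPDF.indicator hA).aemeasurable,
    gaussianReal_of_var_ne_zero 0 one_ne_zero,
    lintegral_withDensity_eq_lintegral_mul _ (measurable_gaussianPDF 0 1)
      (measurable_measure_prodMk_left (hF hA)), ← gaussianReal_of_var_ne_zero 0 one_ne_zero]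
  refine lintegral_congr fun x => ?_
  have hsection : γ (Prod.mk x ⁻¹' ((fun p : ℝ × ℝ => (p.1, ρ * p.1 + s * p.2)) ⁻¹' A)) =
      gaussianReal (ρ * x) (s ^ 2).toNNReal (Prod.mk x ⁻¹' A) := by
    rw [← gaussianReal_map_const_add_mul, Measure.map_apply (by fun_prop)
      (measurable_prodMk_left hA)]
    rfl
  rw [Pi.mul_apply, hsection, gaussianReal_apply _ (by simpa using hs),
    ← lintegral_indicator (measurable_prodMk_left hA),
    ← lintegral_const_mul' _ _ gaussianPDF_ne_top]
  refine lintegral_congr fun z => ?_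
  by_cases hz : (x, z) ∈ A <;> simp [hz, bivariateGaussianPDF]

lemma map_swap_withDensity_bivariateGaussianPDF (hs : s ≠ 0) (hρs : ρ ^ 2 + s ^ 2 = 1) :
    ((volume.prod volume).withDensity (bivariateGaussianPDF ρ s)).map Prod.swap =
      (volume.prod volume).withDensity (bivariateGaussianPDF ρ s) := by
  ext B hB
  rw [Measure.map_apply measurable_swap hB, withDensity_apply _ (measurable_swap hB),
    withDensity_apply _ hB, ← Measure.measurePreserving_swap.setLIntegral_comp_preimage hB
      measurable_bivariateGaussianPDF]
  simp_rw [bivariateGaussianPDF_swap hs hρs]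

lemma withDensity_bivariateGaussianPDF_diagonal :
    (volume.prod volume).withDensity (bivariateGaussianPDF ρ s) (diagonal ℝ) = 0 := by
  refine withDensity_absolutelyContinuous _ _ ?_
  rw [Measure.prod_apply measurableSet_diagonal]
  have (x : ℝ) : Prod.mk x ⁻¹' diagonal ℝ = {x} := by
    ext y
    simp [eq_comm]
  simp [this]

lemma prod_gaussianReal_quadrant (hs : 0 < s) (hρs : ρ ^ 2 + s ^ 2 = 1) (η : ℝ) :
    Measure.prod γ γ {z | η ≤ z.1 ∧ η ≤ ρ * z.1 + s * z.2} =
      2 * Measure.prod γ γ {z | η ≤ z.1 ∧ (1 - ρ) / s * z.1 < z.2} := by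
  have hF : Measurable fun p : ℝ × ℝ => (p.1, ρ * p.1 + s * p.2) := by fun_prop
  have hQ : MeasurableSet {p : ℝ × ℝ | η ≤ p.1 ∧ η ≤ p.2} :=
    (measurableSet_le measurable_const measurable_fst).inter
      (measurableSet_le measurable_const measurable_snd)
  have hlt : MeasurableSet {p : ℝ × ℝ | p.1 < p.2} :=
    measurableSet_lt measurable_fst measurable_snd
  have hhalf := measure_eq_two_mul_measure_inter_lt
    (map_swap_withDensity_bivariateGaussianPDF hs.ne' hρs)
    withDensity_bivariateGaussianPDF_diagonal hQ (by ext; simp [and_comm])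
  rw [← map_prod_gaussianReal_shear hs.ne', Measure.map_apply hF hQ,
    Measure.map_apply hF (hQ.inter hlt)] at hhalf
  refine hhalf.trans (congrArg (fun S => 2 * Measure.prod γ γ S) ?_)
  ext p
  simp only [mem_preimage, mem_inter_iff, mem_ofPred_eq, div_mul_eq_mul_div, div_lt_iff₀ hs]
  constructor
  · rintro ⟨⟨h1, -⟩, h2⟩
    exact ⟨h1, by linarith⟩
  · rintro ⟨h1, h2⟩
    exact ⟨⟨h1, by linarith⟩, by linarith⟩

lemma prod_gaussianReal_wedge (c η : ℝ) :
    Measure.prod γ γ {z | η ≤ z.1 ∧ c * z.1 < z.2} =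
      ∫⁻ x in Ici η, ENNReal.ofReal (gaussTail (c * x)) ∂γ := by
  have hS : MeasurableSet {z : ℝ × ℝ | η ≤ z.1 ∧ c * z.1 < z.2} :=
    (measurableSet_le measurable_const measurable_fst).inter
      (measurableSet_lt (by fun_prop) measurable_snd)
  rw [Measure.prod_apply hS, ← lintegral_indicator measurableSet_Ici]
  refine lintegral_congr fun x => ?_
  by_cases hx : η ≤ x
  · have : Prod.mk x ⁻¹' {z : ℝ × ℝ | η ≤ z.1 ∧ c * z.1 < z.2} = Ioi (c * x) := by
      ext y
      simp [hx]
    rw [this, indicator_of_mem (mem_Ici.2 hx), gaussTail,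
      ENNReal.ofReal_toReal (measure_ne_top _ _), measure_congr Ioi_ae_eq_Ici]
  · have : Prod.mk x ⁻¹' {z : ℝ × ℝ | η ≤ z.1 ∧ c * z.1 < z.2} = ∅ := by
      ext y
      simp [hx]
    rw [this, indicator_of_notMem (fun h => hx (mem_Ici.1 h)), measure_empty]

lemma toReal_prod_gaussianReal_quadrant (hs : 0 < s) (hρs : ρ ^ 2 + s ^ 2 = 1) (η : ℝ) :
    (Measure.prod γ γ {z | η ≤ z.1 ∧ η ≤ ρ * z.1 + s * z.2}).toReal =
      2 * ∫ t in 0..gaussTail η, gaussTailScaled ((1 - ρ) / s) t := by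
  have hcont : Continuous fun x => gaussTail ((1 - ρ) / s * x) := by
    have := continuous_gaussTail
    fun_prop
  rw [prod_gaussianReal_quadrant hs hρs, prod_gaussianReal_wedge, ENNReal.toReal_mul,
    ← integral_toReal hcont.measurable.ennreal_ofReal.aemeasurable
      (ae_of_all _ fun _ => ENNReal.ofReal_lt_top),
    intervalIntegral.integral_of_le (gaussTail_pos η).le, integral_Ioc_gaussTail]
  simp_rw [ENNReal.toReal_ofReal (gaussTail_nonneg _), gaussTailScaled, gaussTailInv_gaussTail]
  rw [gaussianReal_of_var_ne_zero 0 one_ne_zero,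
    setIntegral_withDensity_eq_setIntegral_toReal_smul (measurable_gaussianPDF 0 1)
      (ae_of_all _ fun _ => gaussianPDF_lt_top) _ measurableSet_Ici]
  simp [toReal_gaussianPDF]

end Bivariate

lemma lambdaFn_gaussTailInv {τ : ℝ} (hτ0 : τ ≠ 0) (hτ : τ ^ 2 < 4) {μ : ℝ} (hμ : μ ∈ Ioo 0 1) :
    lambdaFn τ (gaussTailInv μ) =
      2 * (μ⁻¹ * ∫ t in 0..μ, gaussTailScaled (τ ^ 2 / 2 / √(τ ^ 2 - τ ^ 4 / 4)) t) := by
  have hτ2 : 0 < τ ^ 2 := by positivity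
  have hs_sq : √(τ ^ 2 - τ ^ 4 / 4) ^ 2 = τ ^ 2 - τ ^ 4 / 4 := sq_sqrt (by nlinarith)
  have hρs : (1 - τ ^ 2 / 2) ^ 2 + √(τ ^ 2 - τ ^ 4 / 4) ^ 2 = 1 := by rw [hs_sq]; ring
  rw [lambdaFn, toReal_prod_gaussianReal_quadrant (sqrt_pos.2 (by nlinarith)) hρs,
    gaussTail_gaussTailInv hμ, sub_sub_cancel]
  ring

/-- For every fixed `0 < τ < √2`, the function `μ ↦ Λ(τ, Φ_c⁻¹(μ))` is concave on
`0 < μ < 1/2`. -/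
theorem lambda_concave (τ : ℝ) (hτ0 : 0 < τ) (hτ : τ < Real.sqrt 2) :
    ConcaveOn ℝ (Set.Ioo (0 : ℝ) (1 / 2)) (fun μ => lambdaFn τ (gaussTailInv μ)) := by
  have hτ2 : τ ^ 2 < 2 := (Real.lt_sqrt hτ0.le).1 hτ
  have hsub : Ioo (0 : ℝ) (1 / 2) ⊆ Ioo 0 1 := Ioo_subset_Ioo_right (by norm_num)
  have hs : 0 < √(τ ^ 2 - τ ^ 4 / 4) := sqrt_pos.2 (by nlinarith)
  have hc0 : 0 ≤ τ ^ 2 / 2 / √(τ ^ 2 - τ ^ 4 / 4) := by positivity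
  have hc1 : τ ^ 2 / 2 / √(τ ^ 2 - τ ^ 4 / 4) ≤ 1 := by
    rw [div_le_one hs, Real.le_sqrt (by positivity) (by nlinarith)]
    nlinarith
  refine ConcaveOn.congr ?_ fun μ hμ =>
    (lambdaFn_gaussTailInv hτ0.ne' (by linarith) (hsub hμ)).symm
  exact ((concaveOn_gaussTailScaled hc0 hc1).runningAverage fun μ hμ =>
    intervalIntegrable_gaussTailScaled _ (hsub hμ)).smul zero_le_two
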